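/- Let Δ < 0 and 0 < μ < 1, and set α = √(-Δ/(1-μ²)), β = μα. If s = ξ + iη with ξ, η real satisfies ((ξ + a/2)²)/α² + η²/β² = 1 (i.e. s lies on the ellipse centered at -a/2 with semi-axes α, β), then Im(s - μ·√((s + a/2)² + Δ)) = 0, where the square root branch is chosen continuously along the ellipse with √((s+a/2)²+Δ) real positive at s = p₂ = -a/2 + α. -/

import Mathlib

open Complex

/-!
Put `X = ξ + a/2`. The witness is `w = μX + iη/μ`: then `μ w` and `s` have the same
imaginary part `η`, and `w² = (s + a/2)² + Δ` reduces, after clearing `μ²`, to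
`(μ² - 1)(μ²X² + η² - μ²α²) = 0`, which is the ellipse equation once `Δ = -(1 - μ²)α²`.
-/

theorem sq_sqrt_div_mul_of_ne_zero {x y : ℝ} (h : Real.sqrt (x / y) ≠ 0) :
    Real.sqrt (x / y) ^ 2 * y = x := by
  have hpos : 0 < x / y := Real.sqrt_ne_zero'.mp h
  have hy : y ≠ 0 := by rintro rfl; simp at hpos
  rw [Real.sq_sqrt hpos.le, div_mul_cancel₀ x hy]

theorem mul_sq_add_sq_of_div_sq_add_div_mul_sq {μ α X η : ℝ} (hμ : μ ≠ 0) (hα : α ≠ 0)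
    (h : X ^ 2 / α ^ 2 + η ^ 2 / (μ * α) ^ 2 = 1) :
    μ ^ 2 * X ^ 2 + η ^ 2 = μ ^ 2 * α ^ 2 := by
  field_simp at h
  linear_combination h

theorem sq_eq_sq_add_of_mul_sq_add_sq {μ α X η Δ : ℝ} (hμ : μ ≠ 0)
    (hΔ : Δ = -((1 - μ ^ 2) * α ^ 2)) (hE : μ ^ 2 * X ^ 2 + η ^ 2 = μ ^ 2 * α ^ 2) :
    ((μ * X : ℝ) + (η / μ : ℝ) * I : ℂ) ^ 2 = ((X : ℂ) + η * I) ^ 2 + Δ := by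
  apply Complex.ext <;> simp only [sq, mul_re, mul_im, add_re, add_im, ofReal_re, ofReal_im,
    I_re, I_im]
  · subst hΔ
    field_simp
    linear_combination (μ ^ 2 - 1) * hE
  · field_simp
    ring

theorem ellipse_is_steepest_descent_general (a Δ μ α β ξ η : ℝ)
    (hμ0 : 0 < μ)
    (hα : α = Real.sqrt (-Δ / (1 - μ ^ 2))) (hβ : β = μ * α)
    (hell : (ξ + a / 2) ^ 2 / α ^ 2 + η ^ 2 / β ^ 2 = 1) :
    ∃ w : ℂ, w ^ 2 = (((ξ : ℂ) + η * Complex.I) + a / 2) ^ 2 + (Δ : ℂ) ∧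
      ((((ξ : ℂ) + η * Complex.I) - (μ : ℂ) * w).im = 0) := by
  have hμ : μ ≠ 0 := hμ0.ne'
  have hα0 : α ≠ 0 := by rintro rfl; simp [hβ] at hell
  have hΔ : Δ = -((1 - μ ^ 2) * α ^ 2) := by
    have := sq_sqrt_div_mul_of_ne_zero (hα ▸ hα0)
    rw [← hα] at this
    linarith
  have hE := mul_sq_add_sq_of_div_sq_add_div_mul_sq hμ hα0 (hβ ▸ hell)
  refine ⟨((μ * (ξ + a / 2) : ℝ) : ℂ) + ((η / μ : ℝ) : ℂ) * I, ?_, ?_⟩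
  · rw [sq_eq_sq_add_of_mul_sq_add_sq hμ hΔ hE]
    push_cast
    ring
  · simp only [sub_im, add_im, mul_im, ofReal_re, ofReal_im, I_re, I_im]
    field_simp
    ring

/-- If `s = ξ + iη` lies on the ellipse centered at `-a/2` with semi-axes
`α = √(-Δ/(1-μ²))` and `β = μα` (`Δ < 0`, `0 < μ < 1`), then, for the branch of the
square root chosen continuously along the ellipse (real positive at `p₂ = -a/2 + α`),
`Im(s - μ √((s+a/2)² + Δ)) = 0`: i.e. there is a square root `w` of `(s+a/2)² + Δ`
with `Im (s - μ w) = 0`. -/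
theorem ellipse_is_steepest_descent (a Δ μ α β ξ η : ℝ) (hΔ : Δ < 0)
    (hμ0 : 0 < μ) (hμ1 : μ < 1)
    (hα : α = Real.sqrt (-Δ / (1 - μ ^ 2))) (hβ : β = μ * α)
    (hell : (ξ + a / 2) ^ 2 / α ^ 2 + η ^ 2 / β ^ 2 = 1) :
    ∃ w : ℂ, w ^ 2 = (((ξ : ℂ) + η * Complex.I) + a / 2) ^ 2 + (Δ : ℂ) ∧
      ((((ξ : ℂ) + η * Complex.I) - (μ : ℂ) * w).im = 0) :=
  ellipse_is_steepest_descent_general a Δ μ α β ξ η hμ0 hα hβ hell
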